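/- arXiv:2311.06490 — 2 statements merged into one kernel-verified Lean document; each statement's English description precedes it below -/
import Mathlib

section
/- If G is a graph of order n with δ_h(G) ≥ 1 and matching number ν(G) ≥ γ_h(G), then γ_{rh}(G) ≤ ((2 ln(δ_h + 1) + δ_h + 3)/(δ_h + 1)) · n − 2ν(G). -/
open Finset

noncomputable section
open scoped Classical

variable {n : ℕ}

/-- The set of vertices at distance exactly 2 from `i`. -/
def N2 (G : SimpleGraph (Fin n)) (i : Fin n) : Finset (Fin n) :=
  Finset.univ.filter (fun j => G.dist i j = 2)

/-- The neighborhood of `i`. -/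
def Nbr (G : SimpleGraph (Fin n)) (i : Fin n) : Finset (Fin n) :=
  Finset.univ.filter (fun j => G.Adj i j)

/-- Hop degree of a vertex. -/
def hopDeg (G : SimpleGraph (Fin n)) (i : Fin n) : ℕ := (N2 G i).card

/-- Minimum hop degree. -/
def minHopDeg (G : SimpleGraph (Fin n)) : ℕ := ⨅ i, hopDeg G i

/-- Minimum degree. -/
def minDeg (G : SimpleGraph (Fin n)) : ℕ := ⨅ i, (Nbr G i).card

def IsHopDomSet (G : SimpleGraph (Fin n)) (S : Finset (Fin n)) : Prop :=
  ∀ u, u ∉ S → ∃ v ∈ S, G.dist u v = 2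

def IsTwoStepDomSet (G : SimpleGraph (Fin n)) (S : Finset (Fin n)) : Prop :=
  ∀ u : Fin n, ∃ v ∈ S, G.dist u v = 2

def IsRestrainedHopDomSet (G : SimpleGraph (Fin n)) (S : Finset (Fin n)) : Prop :=
  IsHopDomSet G S ∧ ∀ u, u ∉ S → ∃ v, v ∉ S ∧ G.Adj u v

def IsTotalRestrainedHopDomSet (G : SimpleGraph (Fin n)) (S : Finset (Fin n)) : Prop :=
  IsTwoStepDomSet G S ∧ ∀ u, u ∉ S → ∃ v, v ∉ S ∧ G.Adj u v

def IsTwoStepRestrainedDomSet (G : SimpleGraph (Fin n)) (S : Finset (Fin n)) : Prop :=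
  IsHopDomSet G S ∧ ∀ u, u ∉ S → ∃ v, v ∉ S ∧ G.dist u v = 2

def IsTotalTwoStepRestrainedDomSet (G : SimpleGraph (Fin n)) (S : Finset (Fin n)) : Prop :=
  IsTwoStepDomSet G S ∧ ∀ u, u ∉ S → ∃ v, v ∉ S ∧ G.dist u v = 2

def hopDomNum (G : SimpleGraph (Fin n)) : ℕ :=
  sInf {k | ∃ S : Finset (Fin n), IsHopDomSet G S ∧ S.card = k}

def twoStepDomNum (G : SimpleGraph (Fin n)) : ℕ :=
  sInf {k | ∃ S : Finset (Fin n), IsTwoStepDomSet G S ∧ S.card = k}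

def rhDomNum (G : SimpleGraph (Fin n)) : ℕ :=
  sInf {k | ∃ S : Finset (Fin n), IsRestrainedHopDomSet G S ∧ S.card = k}

def trhDomNum (G : SimpleGraph (Fin n)) : ℕ :=
  sInf {k | ∃ S : Finset (Fin n), IsTotalRestrainedHopDomSet G S ∧ S.card = k}

def tsrDomNum (G : SimpleGraph (Fin n)) : ℕ :=
  sInf {k | ∃ S : Finset (Fin n), IsTwoStepRestrainedDomSet G S ∧ S.card = k}

def ttsrDomNum (G : SimpleGraph (Fin n)) : ℕ :=
  sInf {k | ∃ S : Finset (Fin n), IsTotalTwoStepRestrainedDomSet G S ∧ S.card = k}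

/-- The graph `Dist(G;2)` joining vertices at distance exactly 2 in `G`. -/
def dist2Graph (G : SimpleGraph (Fin n)) : SimpleGraph (Fin n) where
  Adj u v := u ≠ v ∧ G.dist u v = 2
  symm := by
    constructor
    intro u v h
    exact ⟨h.1.symm, by rw [SimpleGraph.dist_comm]; exact h.2⟩
  loopless := ⟨fun v h => h.1 rfl⟩

def domNum (H : SimpleGraph (Fin n)) : ℕ :=
  sInf {k | ∃ S : Finset (Fin n), (∀ u, u ∉ S → ∃ v ∈ S, H.Adj u v) ∧ S.card = k}

def totalDomNum (H : SimpleGraph (Fin n)) : ℕ :=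
  sInf {k | ∃ S : Finset (Fin n), (∀ u : Fin n, ∃ v ∈ S, H.Adj u v) ∧ S.card = k}

/-- Matching number: maximum number of edges in a matching. -/
def matchingNum (G : SimpleGraph (Fin n)) : ℕ :=
  sSup {k | ∃ M : SimpleGraph.Subgraph G, M.IsMatching ∧ M.edgeSet.ncard = k}

/-- A hop matching: a set of paths of length two, no two of which share an end vertex. -/
def IsHopMatching (G : SimpleGraph (Fin n)) (H : Finset (Fin n × Fin n × Fin n)) : Prop :=
  (∀ t ∈ H, G.Adj t.1 t.2.1 ∧ G.Adj t.2.1 t.2.2 ∧ t.1 ≠ t.2.2) ∧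
  ∀ t ∈ H, ∀ t' ∈ H, t ≠ t' →
    t.1 ≠ t'.1 ∧ t.1 ≠ t'.2.2 ∧ t.2.2 ≠ t'.1 ∧ t.2.2 ≠ t'.2.2

/-- Hop matching number. -/
def hopMatchingNum (G : SimpleGraph (Fin n)) : ℕ :=
  sSup {k | ∃ H : Finset (Fin n × Fin n × Fin n), IsHopMatching G H ∧ H.card = k}

def frh (G : SimpleGraph (Fin n)) (p : Fin n → ℝ) : ℝ :=
  (∑ i, p i) + (∑ i, (1 - p i) * ∏ j ∈ N2 G i, (1 - p j)) +
  ∑ i, (1 - p i) * (1 - (1 - p i) * ∏ j ∈ N2 G i, (1 - p j)) *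
    ∏ j ∈ Nbr G i, (p j + (1 - p j) * ∏ k ∈ N2 G j, (1 - p k))

def f2sr (G : SimpleGraph (Fin n)) (p : Fin n → ℝ) : ℝ :=
  (∑ i, p i) + (∑ i, (1 - p i) * ∏ j ∈ N2 G i, (1 - p j)) +
  ∑ i, (1 - p i) * (1 - (1 - p i) * ∏ j ∈ N2 G i, (1 - p j)) *
    ∏ j ∈ N2 G i, (p j + (1 - p j) * ∏ k ∈ N2 G j, (1 - p k))

def ZSet (G : SimpleGraph (Fin n)) (X : Finset (Fin n)) : Finset (Fin n) :=
  Finset.univ.filter (fun i => i ∉ X ∧ N2 G i ∩ X = ∅)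

def YSet (G : SimpleGraph (Fin n)) (X : Finset (Fin n)) : Finset (Fin n) :=
  Finset.univ.filter (fun i => i ∉ X ∪ ZSet G X ∧ Nbr G i ⊆ X ∪ ZSet G X)

def DSet (G : SimpleGraph (Fin n)) (X : Finset (Fin n)) : Finset (Fin n) :=
  X ∪ ZSet G X ∪ YSet G X

/-!
Choose every vertex independently with probability `p`. The chosen set `X`, together with the
unchosen vertices having no chosen vertex at distance two, is hop dominating, of expected size at
most `p n + ∑ᵥ (1 - p) ^ (deg_h v + 1)`; with `p = ln (δ_h + 1) / (δ_h + 1)` this gives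
`γ_h ≤ (ln (δ_h + 1) + 1) / (δ_h + 1) n`.

Given a hop dominating set `S` and a maximum matching `M`, remove from `V` the matched vertices
whose `M`-edge misses `S`. What is left still contains `S`, every removed vertex has its removed
`M`-partner as a neighbour, and at most `2 |S|` of the `2 ν` matched vertices are kept, so
`γ_rh ≤ n - 2 ν + 2 γ_h`.
-/

section Bernoulli

variable {α : Type*} [Fintype α]

def bernoulliWeight (p : ℝ) (g : α → Bool) : ℝ := ∏ i, cond (g i) p (1 - p)

theorem bernoulliWeight_pos {p : ℝ} (hp₀ : 0 < p) (hp₁ : p < 1) (g : α → Bool) :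
    0 < bernoulliWeight p g :=
  prod_pos fun i _ => by cases g i <;> simp <;> linarith

variable [DecidableEq α]

theorem sum_bernoulliWeight_mul_indicator (p : ℝ) (T : Finset α) (b : Bool) :
    ∑ g, bernoulliWeight p g * (if ∀ j ∈ T, g j = b then 1 else 0) = cond b p (1 - p) ^ #T := by
  set c : α → Bool → ℝ := fun i x =>
    cond x p (1 - p) * if i ∈ T then (if x = b then 1 else 0) else 1
  have hfactor : ∀ g : α → Bool,
      bernoulliWeight p g * (if ∀ j ∈ T, g j = b then 1 else 0) = ∏ i, c i (g i) := by
    intro g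
    have hind : (if ∀ j ∈ T, g j = b then 1 else 0 : ℝ) = ∏ j ∈ T, if g j = b then 1 else 0 := by
      rw [prod_boole]; congr
    rw [hind, ← Fintype.prod_ite_mem, bernoulliWeight, ← prod_mul_distrib]
  have hcoord : ∀ i, ∑ x, c i x = if i ∈ T then cond b p (1 - p) else 1 := by
    intro i
    by_cases hi : i ∈ T <;> cases b <;> simp [c, hi]
  simp_rw [hfactor, ← Fintype.prod_sum, hcoord, Fintype.prod_ite_mem, prod_const]

theorem sum_bernoulliWeight (p : ℝ) : ∑ g : α → Bool, bernoulliWeight p g = 1 := by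
  simpa using sum_bernoulliWeight_mul_indicator p ∅ true

theorem exists_le_sum_bernoulliWeight_mul {p : ℝ} (hp₀ : 0 < p) (hp₁ : p < 1)
    (f : (α → Bool) → ℝ) :
    ∃ g, f g ≤ ∑ g, bernoulliWeight p g * f g := by
  by_contra! h
  have := sum_lt_sum_of_nonempty univ_nonempty fun g _ =>
    mul_lt_mul_of_pos_left (h g) (bernoulliWeight_pos hp₀ hp₁ g)
  rw [← sum_mul, sum_bernoulliWeight, one_mul] at this
  exact this.false

theorem sum_bernoulliWeight_mul_card_filter (p : ℝ) (T : α → Finset α) (b : Bool) :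
    ∑ g, bernoulliWeight p g * #{i | ∀ j ∈ T i, g j = b} = ∑ i, cond b p (1 - p) ^ #(T i) := by
  simp_rw [natCast_card_filter, mul_sum]
  rw [sum_comm]
  exact sum_congr rfl fun i _ => sum_bernoulliWeight_mul_indicator p (T i) b

end Bernoulli

theorem self_notMem_N2 (G : SimpleGraph (Fin n)) (i : Fin n) : i ∉ N2 G i := by
  simp [N2]

theorem card_insert_N2 (G : SimpleGraph (Fin n)) (i : Fin n) :
    #(insert i (N2 G i)) = hopDeg G i + 1 :=
  card_insert_of_notMem (self_notMem_N2 G i)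

theorem minHopDeg_le_hopDeg (G : SimpleGraph (Fin n)) (i : Fin n) : minHopDeg G ≤ hopDeg G i :=
  ciInf_le (OrderBot.bddBelow _) i

theorem hopDomNum_le_card {G : SimpleGraph (Fin n)} {S : Finset (Fin n)} (hS : IsHopDomSet G S) :
    hopDomNum G ≤ #S :=
  Nat.sInf_le ⟨S, hS, rfl⟩

theorem rhDomNum_le_card {G : SimpleGraph (Fin n)} {S : Finset (Fin n)}
    (hS : IsRestrainedHopDomSet G S) : rhDomNum G ≤ #S :=
  Nat.sInf_le ⟨S, hS, rfl⟩

theorem isHopDomSet_union_ZSet (G : SimpleGraph (Fin n)) (X : Finset (Fin n)) :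
    IsHopDomSet G (X ∪ ZSet G X) := by
  intro u hu
  have hZ : ¬(u ∉ X ∧ N2 G u ∩ X = ∅) := fun h => hu (mem_union_right _ (by simpa [ZSet] using h))
  have hX : u ∉ X := fun h => hu (mem_union_left _ h)
  obtain ⟨v, hv⟩ := nonempty_iff_ne_empty.mpr fun h => hZ ⟨hX, h⟩
  obtain ⟨hvN2, hvX⟩ := mem_inter.mp hv
  exact ⟨v, mem_union_left _ hvX, by simpa [N2] using hvN2⟩

theorem ZSet_filter_eq_true (G : SimpleGraph (Fin n)) (g : Fin n → Bool) :
    ZSet G {i | g i = true} = ({i | ∀ j ∈ insert i (N2 G i), g j = false} : Finset (Fin n)) := by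
  ext i
  simp [ZSet, eq_empty_iff_forall_notMem]

theorem exists_isHopDomSet_card_le (G : SimpleGraph (Fin n)) {p : ℝ} (hp₀ : 0 < p) (hp₁ : p < 1) :
    ∃ S : Finset (Fin n), IsHopDomSet G S ∧
      (#S : ℝ) ≤ p * n + ∑ i, (1 - p) ^ (hopDeg G i + 1) := by
  obtain ⟨g, hg⟩ := exists_le_sum_bernoulliWeight_mul hp₀ hp₁ fun g : Fin n → Bool =>
    (#{i | g i = true} : ℝ) + #{i | ∀ j ∈ insert i (N2 G i), g j = false}
  have hchosen : ∑ g : Fin n → Bool, bernoulliWeight p g * #{i | g i = true} = p * n := by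
    simpa [mul_comm] using sum_bernoulliWeight_mul_card_filter p (fun i : Fin n => {i}) true
  have hunseen : ∑ g : Fin n → Bool,
      bernoulliWeight p g * #{i | ∀ j ∈ insert i (N2 G i), g j = false} =
        ∑ i, (1 - p) ^ (hopDeg G i + 1) := by
    simpa [card_insert_N2] using
      sum_bernoulliWeight_mul_card_filter p (fun i => insert i (N2 G i)) false
  set X : Finset (Fin n) := {i | g i = true}
  refine ⟨X ∪ ZSet G X, isHopDomSet_union_ZSet G X, ?_⟩
  calc (#(X ∪ ZSet G X) : ℝ) ≤ #X + #(ZSet G X) := by exact_mod_cast card_union_le _ _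
    _ ≤ ∑ g : Fin n → Bool, bernoulliWeight p g *
          ((#{i | g i = true} : ℝ) + #{i | ∀ j ∈ insert i (N2 G i), g j = false}) := by
        rwa [ZSet_filter_eq_true]
    _ = p * n + ∑ i, (1 - p) ^ (hopDeg G i + 1) := by
        simp only [mul_add, sum_add_distrib, hchosen, hunseen]

theorem hopDomNum_le_log_bound (G : SimpleGraph (Fin n)) :
    (hopDomNum G : ℝ) ≤ (Real.log (minHopDeg G + 1) + 1) / (minHopDeg G + 1) * n := by
  set δ := minHopDeg G
  obtain hδ | hδ := Nat.eq_zero_or_pos δ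
  · have : hopDomNum G ≤ n := by
      simpa using hopDomNum_le_card (G := G) (S := univ) fun u hu => absurd (mem_univ u) hu
    simp [hδ, this]
  have hm : (1 : ℝ) < δ + 1 := by norm_cast; omega
  -- this `p` minimises the bound `p n + n exp (-p (δ + 1))` on the expectation
  set p := Real.log (δ + 1) / (δ + 1)
  have hp₀ : 0 < p := div_pos (Real.log_pos hm) (by linarith)
  have hp₁ : p < 1 := by
    rw [div_lt_one (by linarith)]
    linarith [Real.log_le_sub_one_of_pos (show (0 : ℝ) < δ + 1 by linarith)]
  obtain ⟨S, hS, hcard⟩ := exists_isHopDomSet_card_le G hp₀ hp₁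
  have hmiss : ∀ i, (1 - p) ^ (hopDeg G i + 1) ≤ 1 / (δ + 1) := by
    intro i
    calc (1 - p) ^ (hopDeg G i + 1) ≤ (1 - p) ^ (δ + 1) :=
          pow_le_pow_of_le_one (by linarith) (by linarith) (by
            have := minHopDeg_le_hopDeg G i; omega)
      _ ≤ Real.exp (-Real.log (δ + 1)) := by
          have := Real.one_sub_div_pow_le_exp_neg (n := δ + 1) (t := Real.log (δ + 1))
            (by push_cast; linarith [Real.log_le_sub_one_of_pos (show (0 : ℝ) < δ + 1 by linarith)])
          simpa using this
      _ = 1 / (δ + 1) := by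
          rw [Real.exp_neg, Real.exp_log (by linarith), one_div]
  calc (hopDomNum G : ℝ) ≤ #S := by exact_mod_cast hopDomNum_le_card hS
    _ ≤ p * n + ∑ i, (1 - p) ^ (hopDeg G i + 1) := hcard
    _ ≤ p * n + ∑ _i : Fin n, 1 / ((δ : ℝ) + 1) := by gcongr with i; exact hmiss i
    _ = (Real.log (δ + 1) + 1) / (δ + 1) * n := by
        simp only [sum_const, card_univ, Fintype.card_fin, nsmul_eq_mul, p]
        field_simp

theorem SimpleGraph.Subgraph.IsMatching.two_mul_ncard_edgeSet_le {V : Type*} [Finite V]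
    {G : SimpleGraph V} {M : G.Subgraph} (hM : M.IsMatching) :
    2 * M.edgeSet.ncard ≤ M.verts.ncard := by
  have := Fintype.ofFinite V
  rw [Set.ncard_eq_toFinset_card', Set.ncard_eq_toFinset_card', mul_comm,
    ← mul_one #M.verts.toFinset]
  refine card_mul_le_card_mul (fun (e : Sym2 V) (v : V) => v ∈ e) (fun e he => ?_)
    (fun v hv => ?_)
  · induction e using Sym2.ind with
    | _ a b =>
      have hab : M.Adj a b := by simpa using he
      refine (card_pair hab.ne).symm.le.trans (card_le_card fun x hx => ?_)
      simp only [mem_bipartiteAbove, Set.mem_toFinset]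
      rcases mem_insert.mp hx with rfl | hx
      · exact ⟨hab.fst_mem, Sym2.mem_mk_left _ _⟩
      · rw [mem_singleton.mp hx]; exact ⟨hab.snd_mem, Sym2.mem_mk_right _ _⟩
  · refine card_le_one.mpr fun e₁ he₁ e₂ he₂ => ?_
    simp only [mem_bipartiteBelow, Set.mem_toFinset] at he₁ he₂
    obtain ⟨w₁, rfl⟩ := Sym2.mem_iff_exists.mp he₁.2
    obtain ⟨w₂, rfl⟩ := Sym2.mem_iff_exists.mp he₂.2
    rw [hM.eq_of_adj_left (M.mem_edgeSet.mp he₁.1) (M.mem_edgeSet.mp he₂.1)]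

theorem exists_isMatching_ncard_edgeSet_eq_matchingNum (G : SimpleGraph (Fin n)) :
    ∃ M : G.Subgraph, M.IsMatching ∧ M.edgeSet.ncard = matchingNum G := by
  refine Nat.sSup_mem (s := {k | ∃ M : G.Subgraph, M.IsMatching ∧ M.edgeSet.ncard = k})
    ⟨0, ⊥, fun v hv => hv.elim, by simp⟩ ⟨Nat.card (Sym2 (Fin n)), ?_⟩
  rintro _ ⟨M, -, rfl⟩
  exact Set.ncard_le_card _

theorem exists_isRestrainedHopDomSet_card_le {G : SimpleGraph (Fin n)} {M : G.Subgraph}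
    (hM : M.IsMatching) {S : Finset (Fin n)} (hS : IsHopDomSet G S) :
    ∃ D, IsRestrainedHopDomSet G D ∧ #D + M.verts.ncard ≤ n + 2 * #S := by
  set R : Finset (Fin n) := {v | v ∉ S ∧ ∃ w ∉ S, M.Adj v w}
  set N : Finset (Fin n) := {v | ∃ w ∈ S, M.Adj v w}
  refine ⟨Rᶜ, ⟨fun u hu => ?_, fun u hu => ?_⟩, ?_⟩
  · obtain ⟨v, hvS, hv⟩ := hS u fun huS => hu (by simp [R, huS])
    exact ⟨v, by simp [R, hvS], hv⟩
  · obtain ⟨huS, w, hwS, huw⟩ : u ∉ S ∧ ∃ w ∉ S, M.Adj u w := by simpa [R] using hu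
    exact ⟨w, by simpa [R] using ⟨hwS, u, huS, huw.symm⟩, M.adj_sub huw⟩
  have hN : #N ≤ #S :=
    card_le_card_of_forall_subsingleton (fun v w => M.Adj v w) (fun v hv => by simpa [N] using hv)
      fun w _ v₁ hv₁ v₂ hv₂ => hM.eq_of_adj_right hv₁.2 hv₂.2
  have hverts : M.verts.toFinset ⊆ R ∪ S ∪ N := by
    intro v hv
    obtain ⟨w, hvw, -⟩ := hM (Set.mem_toFinset.mp hv)
    by_cases hvS : v ∈ S
    · exact mem_union_left _ (mem_union_right _ hvS)
    by_cases hwS : w ∈ S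
    · exact mem_union_right _ (by simp [N]; exact ⟨w, hwS, hvw⟩)
    · exact mem_union_left _ (mem_union_left _ (by simpa [R] using ⟨hvS, w, hwS, hvw⟩))
  have h₁ := card_le_card hverts
  have h₂ := card_union_le (R ∪ S) N
  have h₃ := card_union_le R S
  have h₄ : #Rᶜ + #R = n := by rw [card_compl_add_card, Fintype.card_fin]
  rw [Set.ncard_eq_toFinset_card']
  omega

theorem rhDomNum_add_two_mul_matchingNum_le (G : SimpleGraph (Fin n)) :
    rhDomNum G + 2 * matchingNum G ≤ n + 2 * hopDomNum G := by
  obtain ⟨M, hM, hMcard⟩ := exists_isMatching_ncard_edgeSet_eq_matchingNum G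
  obtain ⟨S, hS, hScard⟩ : ∃ S, IsHopDomSet G S ∧ #S = hopDomNum G :=
    Nat.sInf_mem (s := {k | ∃ S, IsHopDomSet G S ∧ #S = k})
      ⟨n, univ, fun u hu => absurd (mem_univ u) hu, by simp⟩
  obtain ⟨D, hD, hDcard⟩ := exists_isRestrainedHopDomSet_card_le hM hS
  have := rhDomNum_le_card hD
  have := hM.two_mul_ncard_edgeSet_le
  omega

theorem stmt3_general {n : ℕ} (G : SimpleGraph (Fin n)) :
    (rhDomNum G : ℝ) ≤
      (2 * Real.log (minHopDeg G + 1) + minHopDeg G + 3) / (minHopDeg G + 1) * n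
        - 2 * matchingNum G := by
  have hrh : (rhDomNum G : ℝ) + 2 * matchingNum G ≤ n + 2 * hopDomNum G := by
    exact_mod_cast rhDomNum_add_two_mul_matchingNum_le G
  have hγ := hopDomNum_le_log_bound G
  have hδ : (0 : ℝ) < minHopDeg G + 1 := by positivity
  have hsplit : (2 * Real.log (minHopDeg G + 1) + minHopDeg G + 3) / (minHopDeg G + 1) * n
      = n + 2 * ((Real.log (minHopDeg G + 1) + 1) / (minHopDeg G + 1) * n) := by
    field_simp
    ring
  linarith

theorem stmt3 {n : ℕ} (G : SimpleGraph (Fin n)) (hδh : 1 ≤ minHopDeg G)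
    (hν : hopDomNum G ≤ matchingNum G) :
    (rhDomNum G : ℝ) ≤
      (2 * Real.log (minHopDeg G + 1) + minHopDeg G + 3) / (minHopDeg G + 1) * n
        - 2 * matchingNum G :=
  stmt3_general G
end
end

section
/- Let G be a graph on vertices {1,...,n}. If X ⊆ V, Z = {i ∉ X : N_2(i) ∩ X = ∅}, and Y = {i ∉ X ∪ Z : N_2(i) ⊆ X ∪ Z}, then D = X ∪ Z ∪ Y is a 2-step restrained dominating set of G. -/
open Finset

noncomputable section
open scoped Classical

variable {n : ℕ}

lemma mem_N2 {G : SimpleGraph (Fin n)} {i j : Fin n} : j ∈ N2 G i ↔ G.dist i j = 2 := by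
  simp [N2]

lemma mem_N2_comm {G : SimpleGraph (Fin n)} {i j : Fin n} : j ∈ N2 G i ↔ i ∈ N2 G j := by
  rw [mem_N2, mem_N2, SimpleGraph.dist_comm]

lemma IsHopDomSet.mono {G : SimpleGraph (Fin n)} {S T : Finset (Fin n)}
    (hS : IsHopDomSet G S) (hST : S ⊆ T) : IsHopDomSet G T := fun u hu =>
  (hS u fun h => hu (hST h)).imp fun _ ⟨hv, hd⟩ => ⟨hST hv, hd⟩

lemma isHopDomSet_union_filter_N2_inter_eq_empty (G : SimpleGraph (Fin n)) (X : Finset (Fin n)) :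
    IsHopDomSet G (X ∪ univ.filter (fun i => i ∉ X ∧ N2 G i ∩ X = ∅)) := by
  intro u hu
  simp only [mem_union, mem_filter, mem_univ, true_and, not_or, not_and] at hu
  obtain ⟨v, hv⟩ := nonempty_iff_ne_empty.mpr (hu.2 hu.1)
  rw [mem_inter, mem_N2] at hv
  exact ⟨v, mem_union_left _ hv.2, hv.1⟩

/-- Take `v ∈ N2 G u \ S`; then `N2 G v ⊄ S`, as it contains `u ∉ S`. -/
lemma exists_dist_eq_two_not_mem_union_filter_N2_subset (G : SimpleGraph (Fin n))
    (S : Finset (Fin n)) (u : Fin n) (hu : u ∉ S ∪ univ.filter (fun i => i ∉ S ∧ N2 G i ⊆ S)) :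
    ∃ v, v ∉ S ∪ univ.filter (fun i => i ∉ S ∧ N2 G i ⊆ S) ∧ G.dist u v = 2 := by
  simp only [mem_union, mem_filter, mem_univ, true_and, not_or, not_and] at hu ⊢
  obtain ⟨v, hvu, hvS⟩ := not_subset.mp (hu.2 hu.1)
  exact ⟨v, ⟨hvS, fun _ hsub => hu.1 (hsub (mem_N2_comm.mp hvu))⟩, mem_N2.mp hvu⟩

theorem stmt15 {n : ℕ} (G : SimpleGraph (Fin n)) (X Z Y : Finset (Fin n))
    (hZ : Z = Finset.univ.filter (fun i => i ∉ X ∧ N2 G i ∩ X = ∅))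
    (hY : Y = Finset.univ.filter (fun i => i ∉ X ∪ Z ∧ N2 G i ⊆ X ∪ Z)) :
    IsTwoStepRestrainedDomSet G (X ∪ Z ∪ Y) := by
  subst hY
  refine ⟨IsHopDomSet.mono ?_ subset_union_left,
    exists_dist_eq_two_not_mem_union_filter_N2_subset G (X ∪ Z)⟩
  rw [hZ]
  exact isHopDomSet_union_filter_N2_inter_eq_empty G X
end
end
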